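/- arXiv:2004.02209 — 2 statements merged into one kernel-verified Lean document; each statement's English description precedes it below -/
import Mathlib

section
/- (Do nothing to burn faster and brighter.) Let t_max be a time at which I₁ attains its supremum, i.e., I₁(t_max) = sup_{t∈ℝ} I₁(t). Let b_x be an intervention with start time t_i and duration τ such that for some ε > 0 and some t̄ < t_max one has b_x(t) < 1 for almost every t ∈ [t̄ − ε, t̄ + ε]. Then the controlled trajectory (S_{b_x}, I_{b_x}) satisfies I_{b_x}(t) < I₁(t) for all t ∈ [t̄, t_max]. -/
noncomputable section

/-- SIR parameters: β > γ > 0. -/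
structure SIRParams where
  β : ℝ
  γ : ℝ
  hγ : 0 < γ
  hβγ : γ < β

/-- Basic reproduction number R0 = β/γ. -/
def SIRParams.R0 (p : SIRParams) : ℝ := p.β / p.γ

/-- Critical susceptible fraction Scrit = γ/β = 1/R0. -/
def SIRParams.Scrit (p : SIRParams) : ℝ := p.γ / p.β

/-- An intervention with start time `ti` and duration `τ`: a right-continuous
function `b : ℝ → [0,1]` with finitely many discontinuity points such that
`b t = 1` for all `t ∉ [ti, ti + τ]`. -/
structure Intervention (p : SIRParams) where
  b : ℝ → ℝ
  ti : ℝ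
  τ : ℝ
  hτ : 0 < τ
  mem_Icc : ∀ t, b t ∈ Set.Icc (0 : ℝ) 1
  rightCont : ∀ t, ContinuousWithinAt b (Set.Ici t) t
  finiteDisc : {t : ℝ | ¬ ContinuousAt b t}.Finite
  outside : ∀ t, t ∉ Set.Icc ti (ti + τ) → b t = 1

/-- The null intervention b ≡ 1. -/
def nullB : ℝ → ℝ := fun _ => 1

/-- An SIR trajectory under transmission-reduction function `b` on a set `J ⊆ ℝ`
(an interval unbounded above, encoded as being upward closed): a pair of
continuous functions `S, I : ℝ → ℝ` with `0 < S ≤ 1`, `0 ≤ I`, `S + I ≤ 1` on `J`,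
satisfying the integral form of the SIR equations. -/
structure IsSIRTrajectory (p : SIRParams) (b : ℝ → ℝ) (J : Set ℝ) (S I : ℝ → ℝ) : Prop where
  upClosed : ∀ t ∈ J, ∀ s, t ≤ s → s ∈ J
  contS : ContinuousOn S J
  contI : ContinuousOn I J
  Spos : ∀ t ∈ J, 0 < S t
  Sle_one : ∀ t ∈ J, S t ≤ 1
  Inonneg : ∀ t ∈ J, 0 ≤ I t
  sum_le_one : ∀ t ∈ J, S t + I t ≤ 1
  S_eq : ∀ t0 ∈ J, ∀ t ∈ J, t0 ≤ t →
    S t = S t0 - ∫ s in t0..t, b s * p.β * S s * I s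
  I_eq : ∀ t0 ∈ J, ∀ t ∈ J, t0 ≤ t →
    I t = I t0 + ∫ s in t0..t, (b s * p.β * S s * I s - p.γ * I s)

/-- `ImaxAt J I t = sup_{x ≥ t, x ∈ J} I x`. -/
def ImaxAt (J : Set ℝ) (I : ℝ → ℝ) (t : ℝ) : ℝ := sSup (I '' (J ∩ Set.Ici t))

/-- Reference emerging-epidemic trajectory: an SIR trajectory without
intervention on ℝ with I₁ > 0 everywhere, S₁ → 1 and I₁ → 0 as t → −∞. -/
def IsReference (p : SIRParams) (S1 I1 : ℝ → ℝ) : Prop :=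
  IsSIRTrajectory p nullB Set.univ S1 I1 ∧
  (∀ t, 0 < I1 t) ∧
  Filter.Tendsto S1 Filter.atBot (nhds 1) ∧
  Filter.Tendsto I1 Filter.atBot (nhds 0)

/-- The controlled trajectory of intervention `bi`: the SIR trajectory under
`bi.b` on ℝ coinciding with the reference trajectory `(S1, I1)` on `(−∞, bi.ti]`. -/
def IsControlled (p : SIRParams) (S1 I1 : ℝ → ℝ) (bi : Intervention p)
    (S I : ℝ → ℝ) : Prop :=
  IsSIRTrajectory p bi.b Set.univ S I ∧ ∀ t ≤ bi.ti, S t = S1 t ∧ I t = I1 t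

/-- Global peak prevalence of a controlled trajectory: `Imax = sup_{t ∈ ℝ} I t`. -/
def Imax (I : ℝ → ℝ) : ℝ := sSup (Set.range I)

/-- An intervention `bs` (with controlled trajectory `(Sb, Ib)`) is optimal for
its duration if its peak prevalence is at most that of any intervention of the
same duration (with any start time). -/
def IsOptimal (p : SIRParams) (S1 I1 : ℝ → ℝ) (bs : Intervention p)
    (Sb Ib : ℝ → ℝ) : Prop :=
  IsControlled p S1 I1 bs Sb Ib ∧
  ∀ (b : Intervention p), b.τ = bs.τ →
    ∀ S I : ℝ → ℝ, IsControlled p S1 I1 b S I → Imax Ib ≤ Imax I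

/-- A maintain–suppress intervention with maintenance fraction `f ∈ [0,1]`:
`b t = γ/(β·S t)` on `[ti, ti + f·τ)` and `b t = 0` on `[ti + f·τ, ti + τ]`,
where `S` is the controlled trajectory's susceptible fraction. -/
def IsMaintainSuppress (p : SIRParams) (bi : Intervention p) (f : ℝ)
    (S : ℝ → ℝ) : Prop :=
  f ∈ Set.Icc (0 : ℝ) 1 ∧
  (∀ t ∈ Set.Ico bi.ti (bi.ti + f * bi.τ), bi.b t = p.γ / (p.β * S t)) ∧
  (∀ t ∈ Set.Icc (bi.ti + f * bi.τ) (bi.ti + bi.τ), bi.b t = 0)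

/-- A full suppression intervention: `b t = 0` throughout `[ti, ti + τ]`. -/
def IsFullSuppression (p : SIRParams) (bi : Intervention p) : Prop :=
  ∀ t ∈ Set.Icc bi.ti (bi.ti + bi.τ), bi.b t = 0

/-- A fixed control intervention with strictness `σ ∈ [0,1]`: `b t = σ`
throughout `[ti, ti + τ]`. -/
def IsFixedControl (p : SIRParams) (bi : Intervention p) (σ : ℝ) : Prop :=
  σ ∈ Set.Icc (0 : ℝ) 1 ∧ ∀ t ∈ Set.Icc bi.ti (bi.ti + bi.τ), bi.b t = σ


/-!
`V = I + S - (γ/β) log S` is constant along the uncontrolled trajectory and decreases along a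
controlled one at rate `γ I (1 - b)`; as `b < 1` on a set of positive measure just before `tb`,
`V_x < V_1` from `tb` on. On the sublevel set `V ≤ V₁` the equation `(log S)' = -b β I` is
dominated by a `β`-Lipschitz one, and a one-sided Grönwall comparison gives `S_x ≥ S₁`.
Before the peak `S₁ ≥ γ/β`, and `S ↦ S - (γ/β) log S` is increasing there, so
`I = V - (S - (γ/β) log S)` is strictly smaller on the controlled trajectory.
-/

open Set Filter MeasureTheory Real Topology

lemma SIRParams.β_pos (p : SIRParams) : 0 < p.β := p.hγ.trans p.hβγ

lemma SIRParams.Scrit_pos (p : SIRParams) : 0 < p.Scrit := div_pos p.hγ p.β_pos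

theorem image_nonpos_of_deriv_right_le_mul_of_pos {f f' : ℝ → ℝ} {K a b : ℝ}
    (hf : ContinuousOn f (Icc a b)) (hf' : ∀ x ∈ Ico a b, HasDerivWithinAt f (f' x) (Ici x) x)
    (ha : f a ≤ 0) (bound : ∀ x ∈ Ico a b, 0 < f x → f' x ≤ K * f x) :
    ∀ x ∈ Icc a b, f x ≤ 0 := by
  intro x hx
  refine le_of_forall_pos_le_add fun δ hδ => ?_
  set L := |K| + 1
  -- compare with `δ e^{L (y - x)}`, which grows strictly faster than `f` wherever they meet
  have hB (y : ℝ) :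
      HasDerivAt (fun y => δ * exp (L * (y - x))) (L * (δ * exp (L * (y - x)))) y :=
    ((((hasDerivAt_id' y).sub_const x).const_mul L).exp.const_mul δ).congr_deriv (by ring)
  have hle := image_le_of_deriv_right_lt_deriv_boundary hf hf'
    (ha.trans (by positivity)) hB (fun y hy hfy => ?_) hx
  · simpa using hle
  · have hpos : 0 < f y := hfy ▸ by positivity
    calc f' y ≤ K * f y := bound y hy hpos
      _ < L * f y := by nlinarith [le_abs_self K]
      _ = _ := by rw [hfy]

lemma antitoneOn_sub_mul_log {c : ℝ} : AntitoneOn (fun x => x - c * log x) (Ioc 0 c) := by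
  intro x hx y hy hxy
  have hlog : 0 ≤ log (y / x) := log_nonneg ((one_le_div hx.1).2 hxy)
  have h := one_sub_inv_le_log_of_pos (div_pos hy.1 hx.1)
  rw [inv_div, log_div hy.1.ne' hx.1.ne'] at h
  rw [log_div hy.1.ne' hx.1.ne'] at hlog
  have : y * (1 - x / y) = y - x := by field_simp [hy.1.ne']
  simp only
  nlinarith [mul_le_mul_of_nonneg_right hy.2 hlog, mul_le_mul_of_nonneg_left h hy.1.le]

lemma monotoneOn_sub_mul_log {c : ℝ} (hc : 0 < c) :
    MonotoneOn (fun x => x - c * log x) (Ici c) := by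
  intro x hx y hy hxy
  have hx0 : 0 < x := hc.trans_le hx
  have hlog : 0 ≤ log (y / x) := log_nonneg ((one_le_div hx0).2 hxy)
  have h := log_le_sub_one_of_pos (div_pos (hx0.trans_le hxy) hx0)
  rw [log_div (hx0.trans_le hxy).ne' hx0.ne'] at h hlog
  have : x * (y / x - 1) = y - x := by field_simp
  simp only
  nlinarith [mul_le_mul_of_nonneg_right (show c ≤ x from hx) hlog,
    mul_le_mul_of_nonneg_left h hx0.le]

structure IsAdmissibleControl (b : ℝ → ℝ) : Prop where
  measurable : Measurable b
  mem_Icc : ∀ t, b t ∈ Icc (0 : ℝ) 1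
  rightCont : ∀ t, ContinuousWithinAt b (Ici t) t

lemma isAdmissibleControl_nullB : IsAdmissibleControl nullB :=
  ⟨measurable_const, fun _ => ⟨zero_le_one, le_rfl⟩, fun _ => continuousWithinAt_const⟩

lemma Intervention.isAdmissibleControl {p : SIRParams} (bi : Intervention p) :
    IsAdmissibleControl bi.b where
  measurable := measurable_of_measurable_on_compl_finite _ bi.finiteDisc <|
    (continuousOn_iff_continuous_domRestrict.1 fun _ ht =>
      (not_not.1 ht).continuousWithinAt).measurable
  mem_Icc := bi.mem_Icc
  rightCont := bi.rightCont

lemma IsAdmissibleControl.intervalIntegrable {b : ℝ → ℝ} (hb : IsAdmissibleControl b)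
    (u v : ℝ) : IntervalIntegrable b volume u v :=
  (intervalIntegrable_const (c := (1 : ℝ))).mono_fun' hb.measurable.aestronglyMeasurable
    (ae_of_all _ fun t => abs_le.2 ⟨by linarith [(hb.mem_Icc t).1], (hb.mem_Icc t).2⟩)

lemma hasDerivWithinAt_Ici_of_eq_add_integral {g F : ℝ → ℝ} {t₀ t : ℝ} (ht : t₀ < t)
    (hg : ∀ u, t₀ ≤ u → g u = g t₀ + ∫ s in t₀..u, F s) (hFm : Measurable F)
    (hFi : IntervalIntegrable F volume t₀ t) (hFc : ContinuousWithinAt F (Ici t) t) :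
    HasDerivWithinAt g (F t) (Ici t) t :=
  ((intervalIntegral.integral_hasDerivWithinAt_right hFi
    hFm.stronglyMeasurable.stronglyMeasurableAtFilter (hFc.mono Ioi_subset_Ici_self)).const_add
    (g t₀)).congr (fun u hu => hg u (ht.le.trans hu)) (hg t ht.le)

/-- The first integral `V` of the uncontrolled SIR system. -/
def sirInvariant (p : SIRParams) (S I : ℝ → ℝ) (t : ℝ) : ℝ :=
  I t + S t - p.Scrit * log (S t)

namespace IsSIRTrajectory

variable {p : SIRParams} {b S I : ℝ → ℝ}

lemma continuous_S (h : IsSIRTrajectory p b univ S I) : Continuous S :=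
  continuousOn_univ.1 h.contS

lemma continuous_I (h : IsSIRTrajectory p b univ S I) : Continuous I :=
  continuousOn_univ.1 h.contI

lemma measurable_incidence (h : IsSIRTrajectory p b univ S I) (hb : IsAdmissibleControl b) :
    Measurable fun s => b s * p.β * S s * I s :=
  ((hb.measurable.mul_const _).mul h.continuous_S.measurable).mul h.continuous_I.measurable

lemma intervalIntegrable_incidence (h : IsSIRTrajectory p b univ S I)
    (hb : IsAdmissibleControl b) (u v : ℝ) :
    IntervalIntegrable (fun s => b s * p.β * S s * I s) volume u v :=
  (((hb.intervalIntegrable u v).mul_const _).mul_continuousOn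
    h.continuous_S.continuousOn).mul_continuousOn h.continuous_I.continuousOn

lemma continuousWithinAt_incidence (h : IsSIRTrajectory p b univ S I)
    (hb : IsAdmissibleControl b) (t : ℝ) :
    ContinuousWithinAt (fun s => b s * p.β * S s * I s) (Ici t) t :=
  (((hb.rightCont t).mul continuousWithinAt_const).mul
    h.continuous_S.continuousWithinAt).mul h.continuous_I.continuousWithinAt

lemma hasDerivWithinAt_S (h : IsSIRTrajectory p b univ S I) (hb : IsAdmissibleControl b)
    (t : ℝ) : HasDerivWithinAt S (-(b t * p.β * S t * I t)) (Ici t) t :=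
  hasDerivWithinAt_Ici_of_eq_add_integral (F := fun s => -(b s * p.β * S s * I s))
    (sub_one_lt t)
    (fun u hu => by
      rw [intervalIntegral.integral_neg, h.S_eq _ trivial u trivial hu, sub_eq_add_neg])
    (h.measurable_incidence hb).neg (h.intervalIntegrable_incidence hb _ _).neg
    (h.continuousWithinAt_incidence hb t).neg

lemma hasDerivWithinAt_I (h : IsSIRTrajectory p b univ S I) (hb : IsAdmissibleControl b)
    (t : ℝ) : HasDerivWithinAt I (b t * p.β * S t * I t - p.γ * I t) (Ici t) t :=
  hasDerivWithinAt_Ici_of_eq_add_integral (sub_one_lt t)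
    (fun u hu => h.I_eq _ trivial u trivial hu)
    ((h.measurable_incidence hb).sub (h.continuous_I.measurable.const_mul _))
    ((h.intervalIntegrable_incidence hb _ _).sub
      (h.continuous_I.continuousOn.intervalIntegrable.const_mul _))
    ((h.continuousWithinAt_incidence hb t).sub
      (h.continuous_I.continuousWithinAt.const_mul _))

lemma hasDerivWithinAt_log_S (h : IsSIRTrajectory p b univ S I) (hb : IsAdmissibleControl b)
    (t : ℝ) : HasDerivWithinAt (fun u => log (S u)) (-(b t * p.β * I t)) (Ici t) t := by
  have hS := (h.Spos t trivial).ne'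
  refine ((h.hasDerivWithinAt_S hb t).log hS).congr_deriv ?_
  field_simp

lemma continuous_sirInvariant (h : IsSIRTrajectory p b univ S I) :
    Continuous (sirInvariant p S I) :=
  (h.continuous_I.add h.continuous_S).sub
    (continuous_const.mul (h.continuous_S.log fun t => (h.Spos t trivial).ne'))

lemma hasDerivWithinAt_sirInvariant (h : IsSIRTrajectory p b univ S I)
    (hb : IsAdmissibleControl b) (t : ℝ) :
    HasDerivWithinAt (sirInvariant p S I) (p.γ * I t * (b t - 1)) (Ici t) t := by
  refine (((h.hasDerivWithinAt_I hb t).add (h.hasDerivWithinAt_S hb t)).sub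
    ((h.hasDerivWithinAt_log_S hb t).const_mul p.Scrit)).congr_deriv ?_
  have := p.β_pos
  rw [SIRParams.Scrit]
  field_simp
  ring

lemma sirInvariant_sub_sirInvariant (h : IsSIRTrajectory p b univ S I)
    (hb : IsAdmissibleControl b) {u v : ℝ} (huv : u ≤ v) :
    sirInvariant p S I u - sirInvariant p S I v = ∫ s in u..v, p.γ * I s * (1 - b s) := by
  have hint : IntervalIntegrable (fun s => p.γ * I s * (b s - 1)) volume u v :=
    ((hb.intervalIntegrable u v).sub intervalIntegrable_const).continuousOn_mul
      (continuousOn_const.mul h.continuous_I.continuousOn)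
  rw [← neg_sub, ← intervalIntegral.integral_eq_sub_of_hasDeriv_right_of_le huv
    h.continuous_sirInvariant.continuousOn
    (fun x _ => (h.hasDerivWithinAt_sirInvariant hb x).mono Ioi_subset_Ici_self) hint,
    ← intervalIntegral.integral_neg]
  congr 1 with s
  ring

lemma antitone_sirInvariant (h : IsSIRTrajectory p b univ S I) (hb : IsAdmissibleControl b) :
    Antitone (sirInvariant p S I) := fun u v huv => by
  have := h.sirInvariant_sub_sirInvariant hb huv
  have : 0 ≤ ∫ s in u..v, p.γ * I s * (1 - b s) :=
    intervalIntegral.integral_nonneg huv fun s _ => mul_nonneg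
      (mul_nonneg p.hγ.le (h.Inonneg s trivial)) (sub_nonneg.2 (hb.mem_Icc s).2)
  linarith

lemma sirInvariant_eq_of_nullB (h : IsSIRTrajectory p nullB univ S I) (u v : ℝ) :
    sirInvariant p S I u = sirInvariant p S I v := by
  wlog huv : u ≤ v generalizing u v
  · exact (this v u (le_of_not_ge huv)).symm
  rw [← sub_eq_zero, h.sirInvariant_sub_sirInvariant isAdmissibleControl_nullB huv]
  simp [nullB]

lemma sirInvariant_lt (h : IsSIRTrajectory p b univ S I) (hb : IsAdmissibleControl b)
    {u v : ℝ} (huv : u < v) (hI : ∀ t ∈ Ioc u v, 0 < I t)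
    (hlt : ∀ᵐ t, t ∈ Ioc u v → b t < 1) : sirInvariant p S I v < sirInvariant p S I u := by
  rw [← sub_pos, h.sirInvariant_sub_sirInvariant hb huv.le, ← intervalIntegral.integral_zero]
  have hpos : ∀ᵐ t ∂volume.restrict (Ioc u v), 0 < p.γ * I t * (1 - b t) := by
    rw [ae_restrict_iff' measurableSet_Ioc]
    filter_upwards [hlt] with t hbt ht using
      mul_pos (mul_pos p.hγ (hI t ht)) (sub_pos.2 (hbt ht))
  have : (ae (volume.restrict (Ioc u v))).NeBot := ae_neBot.2 (by simp [huv])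
  refine intervalIntegral.integral_lt_integral_of_ae_le_of_measure_setOfPred_lt_ne_zero huv.le
    intervalIntegrable_const ?_ (hpos.mono fun t ht => ht.le) ?_
  · exact (intervalIntegrable_const.sub (hb.intervalIntegrable u v)).continuousOn_mul
      (continuousOn_const.mul h.continuous_I.continuousOn)
  · exact frequently_ae_iff.1 hpos.frequently

lemma I_pos_of_le (h : IsSIRTrajectory p b univ S I) (hb : IsAdmissibleControl b)
    {t₀ t : ℝ} (h₀ : 0 < I t₀) (ht : t₀ ≤ t) : 0 < I t := by
  -- Grönwall applied to `-I`, whose right derivative is at most `-γ · (-I)`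
  have := le_gronwallBound_of_liminf_deriv_right_le (f := fun u => -I u) (δ := -I t₀)
    (K := -p.γ) (ε := 0) (b := t) h.continuous_I.neg.continuousOn
    (fun x _ _ hr => ((h.hasDerivWithinAt_I hb x).neg).liminf_right_slope_le hr) le_rfl
    (fun x _ => by
      nlinarith [mul_nonneg (mul_nonneg (mul_nonneg (hb.mem_Icc x).1 p.β_pos.le)
        (h.Spos x trivial).le) (h.Inonneg x trivial)]) t ⟨ht, le_rfl⟩
  rw [gronwallBound_ε0] at this
  nlinarith [exp_pos (-p.γ * (t - t₀))]

lemma antitone_S (h : IsSIRTrajectory p b univ S I) (hb : IsAdmissibleControl b) :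
    Antitone S := fun u v huv => by
  rw [h.S_eq u trivial v trivial huv, sub_le_self_iff]
  exact intervalIntegral.integral_nonneg huv fun s _ => mul_nonneg (mul_nonneg
    (mul_nonneg (hb.mem_Icc s).1 p.β_pos.le) (h.Spos s trivial).le) (h.Inonneg s trivial)

lemma Scrit_le_S_of_le_peak (h : IsSIRTrajectory p nullB univ S I) (hI : ∀ t, 0 < I t)
    {tmax t : ℝ} (hpeak : ∀ t, I t ≤ I tmax) (ht : t ≤ tmax) : p.Scrit ≤ S t := by
  by_contra! hlt
  obtain ⟨u, hut, hu⟩ := (h.continuous_S.continuousAt.eventually (gt_mem_nhds hlt)).exists_lt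
  -- below `Scrit` the uncontrolled prevalence is strictly decreasing
  have hdec : 0 < ∫ s in u..tmax, -(nullB s * p.β * S s * I s - p.γ * I s) := by
    refine intervalIntegral.intervalIntegral_pos_of_pos_on ?_ (fun s hs => ?_) (hut.trans_le ht)
    · exact ((h.intervalIntegrable_incidence isAdmissibleControl_nullB _ _).sub
        (h.continuous_I.continuousOn.intervalIntegrable.const_mul _)).neg
    · have hS : S s < p.γ / p.β :=
        (h.antitone_S isAdmissibleControl_nullB hs.1.le).trans_lt hu
      have : p.β * S s < p.γ := by rwa [lt_div_iff₀ p.β_pos, mul_comm] at hS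
      simp only [nullB, one_mul]
      nlinarith [hI s]
  rw [intervalIntegral.integral_neg, neg_pos, ← sub_eq_iff_eq_add'.2
    (h.I_eq u trivial tmax trivial (hut.trans_le ht).le)] at hdec
  linarith [hpeak u]

/-- On the sublevel set `{V ≤ V₁}` the controlled `log S` is a supersolution of the reference
equation `(log S₁)' = -β I₁`, and the comparison is one-sided Lipschitz with constant `β`. -/
lemma S_le_S_of_sirInvariant_le {S₁ I₁ : ℝ → ℝ}
    (h₁ : IsSIRTrajectory p nullB univ S₁ I₁) (h : IsSIRTrajectory p b univ S I) (hb : IsAdmissibleControl b)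
    (hV : ∀ t, sirInvariant p S I t ≤ sirInvariant p S₁ I₁ t) {t₀ t : ℝ}
    (h₀ : S₁ t₀ ≤ S t₀) (ht : t₀ ≤ t) : S₁ t ≤ S t := by
  have hS₁ := fun u => h₁.Spos u trivial
  have hS := fun u => h.Spos u trivial
  have key := image_nonpos_of_deriv_right_le_mul_of_pos
    (f := fun u => log (S₁ u) - log (S u)) (K := p.β) (b := t)
    ((h₁.continuous_S.log fun u => (hS₁ u).ne').sub
      (h.continuous_S.log fun u => (hS u).ne')).continuousOn
    (fun x _ => (h₁.hasDerivWithinAt_log_S isAdmissibleControl_nullB x).sub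
      (h.hasDerivWithinAt_log_S hb x))
    (sub_nonpos.2 (log_le_log (hS₁ t₀) h₀)) (fun x _ hx => ?_) t ⟨ht, le_rfl⟩
  · exact (log_le_log_iff (hS₁ t) (hS t)).1 (sub_nonpos.1 key)
  · have hlt : S x < S₁ x := (log_lt_log_iff (hS x) (hS₁ x)).1 (sub_pos.1 hx)
    have hS₁_le := h₁.Sle_one x trivial
    have hchord := antitoneOn_sub_mul_log (c := 1) ⟨hS x, (hlt.trans_le hS₁_le).le⟩
      ⟨hS₁ x, hS₁_le⟩ hlt.le
    have hVx := hV x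
    simp only [sirInvariant, one_mul] at hchord hVx
    have hbI : b x * I x ≤ I x := mul_le_of_le_one_left (h.Inonneg x trivial) (hb.mem_Icc x).2
    simp only [nullB, one_mul]
    nlinarith [p.β_pos, mul_lt_mul_of_pos_left (sub_pos.1 hx) p.Scrit_pos]

end IsSIRTrajectory

theorem do_nothing_burn_faster_general (p : SIRParams) (S1 I1 : ℝ → ℝ)
    (href : IsReference p S1 I1)
    (tmax : ℝ) (hmax : I1 tmax = sSup (Set.range I1))
    (bx : Intervention p) (Sx Ix : ℝ → ℝ)
    (hc : IsControlled p S1 I1 bx Sx Ix)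
    (tb ε : ℝ) (hε : 0 < ε)
    (hae : ∀ᵐ t ∂(MeasureTheory.volume),
      t ∈ Set.Icc (tb - ε) (tb + ε) → bx.b t < 1) :
    ∀ t ∈ Set.Icc tb tmax, Ix t < I1 t := by
  obtain ⟨h₁, hI₁, -, -⟩ := href
  obtain ⟨hx, hcoin⟩ := hc
  have hb := bx.isAdmissibleControl
  have hV₁ := h₁.sirInvariant_eq_of_nullB
  have hV_le (t : ℝ) : sirInvariant p Sx Ix t ≤ sirInvariant p S1 I1 t := by
    obtain ⟨hS, hI⟩ := hcoin _ (min_le_right t bx.ti)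
    calc _ ≤ sirInvariant p Sx Ix (min t bx.ti) := hx.antitone_sirInvariant hb (min_le_left _ _)
      _ = sirInvariant p S1 I1 (min t bx.ti) := by simp only [sirInvariant, hS, hI]
      _ = _ := hV₁ _ _
  have hIx (t : ℝ) : 0 < Ix t :=
    hx.I_pos_of_le hb ((hcoin _ (min_le_right t bx.ti)).2 ▸ hI₁ _) (min_le_left _ _)
  have hS (t : ℝ) : S1 t ≤ Sx t :=
    h₁.S_le_S_of_sirInvariant_le hx hb hV_le (hcoin _ (min_le_right t bx.ti)).1.ge
      (min_le_left _ _)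
  have hpeak (t : ℝ) : I1 t ≤ I1 tmax := hmax ▸ le_csSup ⟨1, by
    rintro _ ⟨s, rfl⟩
    linarith [h₁.sum_le_one s trivial, h₁.Spos s trivial]⟩ ⟨t, rfl⟩
  have hdrop : sirInvariant p Sx Ix tb < sirInvariant p S1 I1 tb :=
    calc _ < sirInvariant p Sx Ix (tb - ε) := hx.sirInvariant_lt hb (by linarith)
          (fun t _ => hIx t) (hae.mono fun t ht ht' => ht ⟨ht'.1.le, by linarith [ht'.2]⟩)
      _ ≤ _ := hV_le _
      _ = _ := hV₁ _ _
  intro t ht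
  have hVt : sirInvariant p Sx Ix t < sirInvariant p S1 I1 t :=
    ((hx.antitone_sirInvariant hb ht.1).trans_lt hdrop).trans_eq (hV₁ _ _)
  have hcrit := h₁.Scrit_le_S_of_le_peak hI₁ hpeak ht.2
  have hmono := monotoneOn_sub_mul_log p.Scrit_pos hcrit (hcrit.trans (hS t)) (hS t)
  simp only [sirInvariant] at hVt hmono
  linarith

/-- Do nothing to burn faster and brighter: any intervention that
genuinely reduces transmission on some interval before the uncontrolled peak
time keeps prevalence strictly below the uncontrolled trajectory from then
until the uncontrolled peak time. -/
theorem do_nothing_burn_faster (p : SIRParams) (S1 I1 : ℝ → ℝ)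
    (href : IsReference p S1 I1)
    (tmax : ℝ) (hmax : I1 tmax = sSup (Set.range I1))
    (bx : Intervention p) (Sx Ix : ℝ → ℝ)
    (hc : IsControlled p S1 I1 bx Sx Ix)
    (tb ε : ℝ) (hε : 0 < ε) (htb : tb < tmax)
    (hae : ∀ᵐ t ∂(MeasureTheory.volume),
      t ∈ Set.Icc (tb - ε) (tb + ε) → bx.b t < 1) :
    ∀ t ∈ Set.Icc tb tmax, Ix t < I1 t :=
  do_nothing_burn_faster_general p S1 I1 href tmax hmax bx Sx Ix hc tb ε hε hae
end
end

section
/- (Peak early.) Let b* be an optimal intervention of duration τ that is a maintain–suppress intervention with start time t_i and maintenance fraction f ∈ [0,1]. If Imax(b*) = I_{b*}(t) for some t ∈ [t_i, t_i + τ], then Imax(b*) = I_{b*}(t_i). -/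
noncomputable section

/-!
Under a maintain–suppress intervention the effective reproduction number `b β S / γ` is
exactly `1` while maintaining and `0` while suppressing, so `I' = (b β S - γ) I ≤ 0` throughout
`[t_i, t_i + τ]`. Hence any value of `I` in that window is at most `I (t_i) ≤ Imax`.
-/

namespace IsSIRTrajectory

variable {p : SIRParams} {b : ℝ → ℝ} {J : Set ℝ} {S I : ℝ → ℝ}

theorem Icc_subset (h : IsSIRTrajectory p b J S I) {t0 t : ℝ} (ht0 : t0 ∈ J) :
    Set.Icc t0 t ⊆ J :=
  fun s hs => h.upClosed t0 ht0 s hs.1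

theorem I_le_of_forall_mul_le (h : IsSIRTrajectory p b J S I) {t0 t : ℝ} (ht0 : t0 ∈ J)
    (ht : t0 ≤ t) (hR : ∀ s ∈ Set.Icc t0 t, b s * p.β * S s ≤ p.γ) : I t ≤ I t0 := by
  have hJ := h.Icc_subset (t := t) ht0
  have hintegrand : ∀ s ∈ Set.Icc t0 t, 0 ≤ -(b s * p.β * S s * I s - p.γ * I s) :=
    fun s hs => by nlinarith [hR s hs, h.Inonneg s (hJ hs)]
  have hintegral : ∫ s in t0..t, (b s * p.β * S s * I s - p.γ * I s) ≤ 0 := by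
    simpa only [intervalIntegral.integral_neg, Left.nonneg_neg_iff] using
      intervalIntegral.integral_nonneg ht hintegrand
  linarith [h.I_eq t0 ht0 t (hJ ⟨ht, le_rfl⟩) ht]

theorem bddAbove_range (h : IsSIRTrajectory p b Set.univ S I) : BddAbove (Set.range I) := by
  refine ⟨1, ?_⟩
  rintro _ ⟨x, rfl⟩
  linarith [h.sum_le_one x trivial, h.Spos x trivial]

theorem le_Imax (h : IsSIRTrajectory p b Set.univ S I) (x : ℝ) : I x ≤ Imax I :=
  le_csSup h.bddAbove_range ⟨x, rfl⟩

end IsSIRTrajectory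

theorem IsMaintainSuppress.b_mul_le {p : SIRParams} {bi : Intervention p} {f : ℝ}
    {S : ℝ → ℝ} (hms : IsMaintainSuppress p bi f S) {s : ℝ}
    (hs : s ∈ Set.Icc bi.ti (bi.ti + bi.τ)) (hS : 0 < S s) : bi.b s * p.β * S s ≤ p.γ := by
  obtain ⟨-, hmaintain, hsuppress⟩ := hms
  rcases lt_or_ge s (bi.ti + f * bi.τ) with hlt | hge
  · have hβ : p.β ≠ 0 := (p.hγ.trans p.hβγ).ne'
    rw [hmaintain s ⟨hs.1, hlt⟩]
    field_simp
    exact le_rfl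
  · rw [hsuppress s ⟨hge, hs.2⟩, zero_mul, zero_mul]
    exact p.hγ.le

theorem peak_early_general (p : SIRParams) (S1 I1 : ℝ → ℝ)
    (bs : Intervention p) (Sb Ib : ℝ → ℝ) (f : ℝ)
    (hopt : IsOptimal p S1 I1 bs Sb Ib)
    (hms : IsMaintainSuppress p bs f Sb)
    (t : ℝ) (ht : t ∈ Set.Icc bs.ti (bs.ti + bs.τ))
    (heq : Imax Ib = Ib t) :
    Imax Ib = Ib bs.ti := by
  have htraj := hopt.1.1
  have hdecreasing : Ib t ≤ Ib bs.ti :=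
    htraj.I_le_of_forall_mul_le trivial ht.1 fun s hs =>
      hms.b_mul_le ⟨hs.1, hs.2.trans ht.2⟩ (htraj.Spos s trivial)
  exact le_antisymm (heq ▸ hdecreasing) (htraj.le_Imax bs.ti)

/-- Peak early: if the global peak of an optimal
maintain–suppress intervention occurs during the intervention, it occurs at the
start. -/
theorem peak_early (p : SIRParams) (S1 I1 : ℝ → ℝ)
    (href : IsReference p S1 I1)
    (bs : Intervention p) (Sb Ib : ℝ → ℝ) (f : ℝ)
    (hopt : IsOptimal p S1 I1 bs Sb Ib)
    (hms : IsMaintainSuppress p bs f Sb)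
    (t : ℝ) (ht : t ∈ Set.Icc bs.ti (bs.ti + bs.τ))
    (heq : Imax Ib = Ib t) :
    Imax Ib = Ib bs.ti :=
  peak_early_general p S1 I1 bs Sb Ib f hopt hms t ht heq
end
end
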